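/- arXiv:2405.17118 — 2 statements merged into one kernel-verified Lean document; each statement's English description precedes it below -/
import Mathlib

section
/- Let D be an étale φ-module over K = k((t)) with operator ψ. If E ⊆ D is a lattice with E ⊆ k[[t]]·φ(E) (the k[[t]]-submodule generated by φ(E)), then ψ(E) ⊆ E. -/
/-- The `k[[t]]`-module structure on a `k((t))`-vector space, by restriction of scalars. -/
noncomputable instance psModule {k : Type*} [Field k] (D : Type*) [AddCommGroup D]
    [Module (LaurentSeries k) D] : Module (PowerSeries k) D :=
  Module.compHom D (algebraMap (PowerSeries k) (LaurentSeries k))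

/-- If `E` is a lattice in an étale `φ`-module `D` over `k((t))` with
`E ⊆ k[[t]]·φ(E)`, then `ψ(E) ⊆ E`. -/
theorem stmt5 {k : Type*} [Field k] (q : ℕ)
    (φK : LaurentSeries k →+* LaurentSeries k)
    (hφKt : φK (HahnSeries.single 1 1) = HahnSeries.single 1 1 ^ q)
    (ψK : LaurentSeries k → LaurentSeries k)
    (hψK : ∀ a b : LaurentSeries k, ψK (φK a * b) = a * ψK b)
    (hψKps : ∀ f : PowerSeries k, ∃ g : PowerSeries k,
      ψK (algebraMap (PowerSeries k) (LaurentSeries k) f)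
        = algebraMap (PowerSeries k) (LaurentSeries k) g)
    (D : Type*) [AddCommGroup D] [Module (LaurentSeries k) D]
    [FiniteDimensional (LaurentSeries k) D]
    (φ : D →ₛₗ[φK] D)
    (hEt : Submodule.span (LaurentSeries k) (Set.range fun x => φ x) = ⊤)
    (ψ : D → D) (hψadd : ∀ x y, ψ (x + y) = ψ x + ψ y)
    (hψ1 : ∀ (a : LaurentSeries k) (x : D), ψ (a • φ x) = ψK a • x)
    (hψ2 : ∀ (a : LaurentSeries k) (x : D), ψ (φK a • x) = a • ψ x)
    (E : Submodule (PowerSeries k) D) (hFG : E.FG)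
    (hspan : Submodule.span (LaurentSeries k) (E : Set D) = ⊤)
    (hsub : (E : Set D) ⊆
      ↑(Submodule.span (PowerSeries k) ((fun x => φ x) '' (E : Set D)))) :
    ∀ x ∈ E, ψ x ∈ E := by
  intro x hx
  have hx' : x ∈ Submodule.span (PowerSeries k) ((fun x => φ x) '' (E : Set D)) :=
    hsub hx
  rw [Submodule.mem_span_set'] at hx'
  obtain ⟨n, f, g, hsum⟩ := hx'
  let Ψ : D →+ D := AddMonoidHom.mk' ψ hψadd
  have hΨ : ∀ y, Ψ y = ψ y := fun _ => rfl
  rw [← hsum, ← hΨ, map_sum]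
  apply Submodule.sum_mem
  intro i _
  obtain ⟨e, he, heq⟩ := (g i).2
  obtain ⟨gg, hgg⟩ := hψKps (f i)
  have key : ψ (f i • (g i : D)) = gg • e := by
    rw [← heq]
    show ψ ((algebraMap (PowerSeries k) (LaurentSeries k) (f i)) • φ e) = _
    rw [hψ1, hgg]
    rfl
  rw [hΨ, key]
  exact E.smul_mem _ he
end

section
/- Let D be an étale φ-module over K = k((t)) with operator ψ, and suppose there exists a ∈ k[[t]] with ψ_K(a) = 1. If E₀ is a lattice with φ(E₀) ⊆ t·E₀, then for all n ≥ 0 one has ψ^n(E₀) ⊆ ψ^{n+1}(E₀), i.e., the sequence of k[[t]]-modules ψ^n(E₀) is increasing. -/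
/-- If there is `a ∈ k[[t]]` with `ψK(a) = 1` and `E₀` is a lattice with
`φ(E₀) ⊆ t·E₀`, then `ψ^n(E₀) ⊆ ψ^{n+1}(E₀)` for all `n ≥ 0`. -/
theorem stmt9 {k : Type*} [Field k] (q : ℕ)
    (φK : LaurentSeries k →+* LaurentSeries k)
    (hφKt : φK (HahnSeries.single 1 1) = HahnSeries.single 1 1 ^ q)
    (ψK : LaurentSeries k → LaurentSeries k)
    (hψK : ∀ a b : LaurentSeries k, ψK (φK a * b) = a * ψK b)
    (hψKps : ∀ f : PowerSeries k, ∃ g : PowerSeries k,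
      ψK (algebraMap (PowerSeries k) (LaurentSeries k) f)
        = algebraMap (PowerSeries k) (LaurentSeries k) g)
    (D : Type*) [AddCommGroup D] [Module (LaurentSeries k) D]
    [FiniteDimensional (LaurentSeries k) D]
    (φ : D →ₛₗ[φK] D)
    (hEt : Submodule.span (LaurentSeries k) (Set.range fun x => φ x) = ⊤)
    (ψ : D → D) (hψadd : ∀ x y, ψ (x + y) = ψ x + ψ y)
    (hψ1 : ∀ (a : LaurentSeries k) (x : D), ψ (a • φ x) = ψK a • x)
    (hψ2 : ∀ (a : LaurentSeries k) (x : D), ψ (φK a • x) = a • ψ x)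
    (ha : ∃ a : PowerSeries k, ψK (algebraMap (PowerSeries k) (LaurentSeries k) a) = 1)
    (E₀ : Submodule (PowerSeries k) D) (hFG : E₀.FG)
    (hspan : Submodule.span (LaurentSeries k) (E₀ : Set D) = ⊤)
    (hφE₀ : ∀ x ∈ E₀, ∃ y ∈ E₀,
      φ x = (HahnSeries.single (1 : ℤ) (1 : k) : LaurentSeries k) • y) :
    ∀ n : ℕ, ∀ x ∈ E₀, ∃ y ∈ E₀, ψ^[n] x = ψ^[n + 1] y := by
  intro n x hx
  obtain ⟨a, haψ⟩ := ha
  obtain ⟨z, hz, hφx⟩ := hφE₀ x hx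
  refine ⟨(a * PowerSeries.X) • z, Submodule.smul_mem _ _ hz, ?_⟩
  have hX : algebraMap (PowerSeries k) (LaurentSeries k) PowerSeries.X
      = (HahnSeries.single (1 : ℤ) (1 : k) : LaurentSeries k) := by
    rw [LaurentSeries.coe_algebraMap]; exact HahnSeries.ofPowerSeries_X
  have key : ψ ((a * PowerSeries.X) • z) = x := by
    have h1 : ((a * PowerSeries.X) • z : D)
        = (algebraMap (PowerSeries k) (LaurentSeries k) a) • φ x := by
      show (algebraMap (PowerSeries k) (LaurentSeries k) (a * PowerSeries.X)) • z = _
      rw [map_mul, hX, hφx, mul_smul]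
    rw [h1, hψ1, haψ, one_smul]
  rw [Function.iterate_succ_apply, key]
end
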